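/- (Lemma A.7) For Adam, under assumptions (S1)-(S3) and (A1)-(A2), suppose additionally that β_{1k} = β₁ ∈ (0,1) for all k, (α_k)_{k∈ℕ} is monotone decreasing, and Condition (M) holds. Then for all K ≥ 1 and all θ ∈ ℝ^d: (1/K)∑_{k=1}^K E[(θ_k − θ)ᵀ m_k] ≤ d D̃(θ)√M β̃_{1K}/(2β₁ α_K √(β̃_{2K}) K) + ((σ²/b + G²)/(2√(v_*) β₁ (1−β₁) K)) ∑_{k=1}^K α_k √(β̃_{2k}) + D(θ) G (1−β₁)/β₁ + (1−β₁) D(θ)(B + √(σ²/b + G²)). -/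

import Mathlib

/-!
Coordinatewise, Adam is the descent step `θ_{k+1,i} = θ_{k,i} - η_{k,i} m_{k,i}` with effective
step size `η_{k,i} = α_k / (β̃_{1k} √v̂_{k,i})`, which is nonincreasing in `k` because `α_k`
decreases while `β̃_{1k}` and (Condition (M)) `v̂_{k,i}` increase. Expanding the square,
`(θ_k - θ)_i m_{k,i} = ((θ_k - θ)_i² - (θ_{k+1} - θ)_i²) / (2η_{k,i}) + η_{k,i} m_{k,i}² / 2`,
and summation by parts bounds the telescoping part by `D̃(θ) / (2η_{K,i})`; the bounds
`v_* ≤ v_{k,i} ≤ M` control the step sizes. In expectation, unbiasedness gives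
`E‖g_k‖² = E‖g_k - ∇f(θ_k)‖² + E‖∇f(θ_k)‖² ≤ σ²/b + G²`, and `m_k`, a convex combination of the
`g_j`, inherits this bound. The resulting estimate is sharper than the stated one, whose last two
terms are nonnegative.
-/

open MeasureTheory Filter Real

theorem sum_Icc_mul_sub_succ_le {c s : ℕ → ℝ} {S : ℝ} (hc : Monotone c) (hc0 : ∀ k, 0 ≤ c k)
    (hs0 : ∀ k, 0 ≤ s k) (hsS : ∀ k, s k ≤ S) (K : ℕ) :
    ∑ k ∈ Finset.Icc 1 K, c k * (s k - s (k + 1)) ≤ c K * S := by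
  suffices h : ∀ K, ∑ k ∈ Finset.Icc 1 K, c k * (s k - s (k + 1)) ≤ c K * (S - s (K + 1)) by
    nlinarith [h K, mul_nonneg (hc0 K) (hs0 (K + 1))]
  intro K
  induction K with
  | zero => simpa using mul_nonneg (hc0 0) (sub_nonneg.2 (hsS 1))
  | succ K ih =>
    rw [Finset.sum_Icc_succ_top (by omega)]
    nlinarith [mul_nonneg (sub_nonneg.2 (hc K.le_succ)) (sub_nonneg.2 (hsS (K + 1)))]

theorem sum_Icc_sub_mul_le_of_eq_sub_mul {θ g η : ℕ → ℝ} {x D : ℝ} (hη : ∀ k, 0 < η k)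
    (hη' : Antitone η) (hθ : ∀ k, θ (k + 1) = θ k - η k * g k) (hD : ∀ k, (θ k - x) ^ 2 ≤ D)
    (K : ℕ) :
    ∑ k ∈ Finset.Icc 1 K, (θ k - x) * g k ≤
      D / (2 * η K) + ∑ k ∈ Finset.Icc 1 K, η k / 2 * g k ^ 2 := by
  have hsplit : ∀ k, (θ k - x) * g k =
      (2 * η k)⁻¹ * ((θ k - x) ^ 2 - (θ (k + 1) - x) ^ 2) + η k / 2 * g k ^ 2 := by
    intro k
    rw [hθ]
    field_simp [(hη k).ne']
    ring
  have hc : Monotone fun k => (2 * η k)⁻¹ := fun a b hab =>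
    inv_anti₀ (by linarith [hη b]) (by linarith [hη' hab])
  rw [Finset.sum_congr rfl fun k _ => hsplit k, Finset.sum_add_distrib, div_eq_inv_mul]
  gcongr
  exact sum_Icc_mul_sub_succ_le hc (fun k => by have := hη k; positivity)
    (fun k => sq_nonneg _) hD K

theorem adam_sum_sub_mul_le {θ g v vh α β2 : ℕ → ℝ} {x β1 D M vstar : ℝ} {K : ℕ}
    (hα : ∀ k, 0 < α k) (hα' : Antitone α) (hβ1 : 0 ≤ β1) (hβ1' : β1 < 1)
    (hβ2 : ∀ k, β2 k ∈ Set.Ico 0 1) (hvstar : 0 < vstar)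
    (hθ : ∀ k, θ (k + 1) = θ k - α k / ((1 - β1 ^ (k + 1)) * √(vh k)) * g k)
    (hvh : ∀ k, vh k = v k / (1 - β2 k ^ (k + 1))) (hlow : ∀ k, vstar ≤ v k) (htop : v K ≤ M)
    (hmono : Monotone vh) (hD : ∀ k, (θ k - x) ^ 2 ≤ D) :
    ∑ k ∈ Finset.Icc 1 K, (θ k - x) * g k ≤
      D * √M * (1 - β1 ^ (K + 1)) / (2 * α K * √(1 - β2 K ^ (K + 1))) +
        ∑ k ∈ Finset.Icc 1 K,
          α k * √(1 - β2 k ^ (k + 1)) / (2 * (1 - β1 ^ (k + 1)) * √vstar) * g k ^ 2 := by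
  have hb1 : ∀ k, 0 < 1 - β1 ^ (k + 1) := fun k => sub_pos.2 (pow_lt_one₀ hβ1 hβ1' k.succ_ne_zero)
  have hb2 : ∀ k, 0 < 1 - β2 k ^ (k + 1) := fun k =>
    sub_pos.2 (pow_lt_one₀ (hβ2 k).1 (hβ2 k).2 k.succ_ne_zero)
  have hsqrt_vh : ∀ k, √vstar / √(1 - β2 k ^ (k + 1)) ≤ √(vh k) := fun k => by
    rw [← sqrt_div' _ (hb2 k).le, hvh]
    exact sqrt_le_sqrt (div_le_div_of_nonneg_right (hlow k) (hb2 k).le)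
  have hvh_pos : ∀ k, 0 < √(vh k) := fun k =>
    (div_pos (sqrt_pos.2 hvstar) (sqrt_pos.2 (hb2 k))).trans_le (hsqrt_vh k)
  set η := fun k => α k / ((1 - β1 ^ (k + 1)) * √(vh k)) with hη_def
  have hη : ∀ k, 0 < η k := fun k => by
    have := hb1 k; have := hvh_pos k; have := hα k; positivity
  have hη' : Antitone η := antitone_nat_of_succ_le fun k => by
    refine div_le_div₀ (hα k).le (hα' k.le_succ) (mul_pos (hb1 k) (hvh_pos k)) ?_
    refine mul_le_mul ?_ (sqrt_le_sqrt (hmono k.le_succ)) (hvh_pos k).le (hb1 (k + 1)).le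
    linarith [pow_le_pow_of_le_one hβ1 hβ1'.le (by omega : k + 1 ≤ k + 1 + 1)]
  have hηK : D / (2 * η K) ≤
      D * √M * (1 - β1 ^ (K + 1)) / (2 * α K * √(1 - β2 K ^ (K + 1))) := by
    have hD0 : 0 ≤ D := (sq_nonneg _).trans (hD 0)
    have hsqrt : √(vh K) ≤ √M / √(1 - β2 K ^ (K + 1)) := by
      rw [← sqrt_div' _ (hb2 K).le, hvh]
      exact sqrt_le_sqrt (div_le_div_of_nonneg_right htop (hb2 K).le)
    have := hb1 K; have := hα K
    calc D / (2 * η K) = D * (1 - β1 ^ (K + 1)) * √(vh K) / (2 * α K) := by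
          simp only [hη_def]; field_simp
      _ ≤ D * (1 - β1 ^ (K + 1)) * (√M / √(1 - β2 K ^ (K + 1))) / (2 * α K) := by gcongr
      _ = _ := by ring
  have hη_le : ∀ k, η k / 2 ≤
      α k * √(1 - β2 k ^ (k + 1)) / (2 * (1 - β1 ^ (k + 1)) * √vstar) := fun k => by
    have := hb1 k; have := hα k
    have := sqrt_pos.2 (hb2 k); have := sqrt_pos.2 hvstar
    calc η k / 2 = α k / (2 * (1 - β1 ^ (k + 1)) * √(vh k)) := by
          simp only [hη_def]; field_simp
      _ ≤ α k / (2 * (1 - β1 ^ (k + 1)) * (√vstar / √(1 - β2 k ^ (k + 1)))) := by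
          gcongr; exact hsqrt_vh k
      _ = _ := by field_simp
  refine (sum_Icc_sub_mul_le_of_eq_sub_mul hη hη' hθ hD K).trans ?_
  exact add_le_add hηK (Finset.sum_le_sum fun k _ =>
    mul_le_mul_of_nonneg_right (hη_le k) (sq_nonneg _))

theorem adam_sum_inner_le {d : ℕ} {θ m : ℕ → EuclideanSpace ℝ (Fin d)}
    {v vh : ℕ → Fin d → ℝ} {α β2 : ℕ → ℝ} {x : EuclideanSpace ℝ (Fin d)} {β1 D M vstar : ℝ}
    {K : ℕ} (hα : ∀ k, 0 < α k) (hα' : Antitone α) (hβ1 : 0 ≤ β1) (hβ1' : β1 < 1)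
    (hβ2 : ∀ k, β2 k ∈ Set.Ico 0 1) (hvstar : 0 < vstar)
    (hθ : ∀ k i, θ (k + 1) i = θ k i - α k / ((1 - β1 ^ (k + 1)) * √(vh k i)) * m k i)
    (hvh : ∀ k i, vh k i = v k i / (1 - β2 k ^ (k + 1))) (hlow : ∀ k i, vstar ≤ v k i)
    (htop : ∀ i, v K i ≤ M) (hmono : ∀ i, Monotone (vh · i))
    (hD : ∀ k i, (θ k i - x i) ^ 2 ≤ D) :
    ∑ k ∈ Finset.Icc 1 K, inner ℝ (θ k - x) (m k) ≤
      d * D * √M * (1 - β1 ^ (K + 1)) / (2 * α K * √(1 - β2 K ^ (K + 1))) +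
        ∑ k ∈ Finset.Icc 1 K,
          α k * √(1 - β2 k ^ (k + 1)) / (2 * (1 - β1 ^ (k + 1)) * √vstar) * ‖m k‖ ^ 2 := by
  calc ∑ k ∈ Finset.Icc 1 K, inner ℝ (θ k - x) (m k)
      = ∑ i, ∑ k ∈ Finset.Icc 1 K, (θ k i - x i) * m k i := by
        rw [Finset.sum_comm]
        simp [PiLp.inner_apply, mul_comm]
    _ ≤ ∑ i : Fin d, (D * √M * (1 - β1 ^ (K + 1)) / (2 * α K * √(1 - β2 K ^ (K + 1))) +
        ∑ k ∈ Finset.Icc 1 K,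
          α k * √(1 - β2 k ^ (k + 1)) / (2 * (1 - β1 ^ (k + 1)) * √vstar) * m k i ^ 2) :=
        Finset.sum_le_sum fun i _ => adam_sum_sub_mul_le hα hα' hβ1 hβ1' hβ2 hvstar
          (fun k => hθ k i) (fun k => hvh k i) (fun k => hlow k i) (htop i) (hmono i)
          (fun k => hD k i)
    _ = _ := by
        simp_rw [Finset.sum_add_distrib, EuclideanSpace.real_norm_sq_eq, Finset.mul_sum]
        rw [Finset.sum_comm (s := Finset.univ)]
        simp [mul_assoc, mul_div_assoc]

theorem ema_mem_of_convex {F : Type*} [AddCommGroup F] [Module ℝ F] {s : Set F}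
    (hs : Convex ℝ s) (hs0 : 0 ∈ s) {β : ℕ → ℝ} (hβ : ∀ k, β k ∈ Set.Icc 0 1) {y z : ℕ → F}
    (hz : ∀ k, z k ∈ s) (hy0 : y 0 = (1 - β 0) • z 0)
    (hy : ∀ k, y (k + 1) = β (k + 1) • y k + (1 - β (k + 1)) • z (k + 1)) (k : ℕ) : y k ∈ s := by
  have hcomb : ∀ k, ∀ a ∈ s, β k • a + (1 - β k) • z k ∈ s := fun k a ha =>
    hs ha (hz k) (hβ k).1 (sub_nonneg.2 (hβ k).2) (add_sub_cancel _ _)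
  induction k with
  | zero => simpa [hy0] using hcomb 0 0 hs0
  | succ k ih => exact hy k ▸ hcomb (k + 1) _ ih

section SecondMoment

variable {Ω : Type*} {m m0 : MeasurableSpace Ω} {μ : Measure Ω}

theorem MeasureTheory.MemLp.integrable_inner {F : Type*} [NormedAddCommGroup F]
    [InnerProductSpace ℝ F] {f g : Ω → F} (hf : MemLp f 2 μ) (hg : MemLp g 2 μ) :
    Integrable (fun ω => inner ℝ (f ω) (g ω)) μ :=
  (L2.integrable_inner (hf.toLp f) (hg.toLp g)).congr <| by
    filter_upwards [hf.coeFn_toLp, hg.coeFn_toLp] with ω hfω hgω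
    rw [hfω, hgω]

theorem convex_memLp_two_integral_norm_sq_le {F : Type*} [NormedAddCommGroup F]
    [NormedSpace ℝ F] (S : ℝ) :
    Convex ℝ {f : Ω → F | MemLp f 2 μ ∧ ∫ ω, ‖f ω‖ ^ 2 ∂μ ≤ S} := by
  rintro f ⟨hf, hfS⟩ g ⟨hg, hgS⟩ a b ha hb hab
  have hsq := (convexOn_univ_norm (E := F)).pow (fun _ _ => norm_nonneg _) 2
  have hfg : MemLp (a • f + b • g) 2 μ := (hf.const_smul a).add (hg.const_smul b)
  refine ⟨hfg, ?_⟩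
  calc ∫ ω, ‖(a • f + b • g) ω‖ ^ 2 ∂μ
      ≤ ∫ ω, (a * ‖f ω‖ ^ 2 + b * ‖g ω‖ ^ 2) ∂μ := by
        refine integral_mono (hfg.integrable_norm_pow two_ne_zero)
          (((hf.integrable_norm_pow two_ne_zero).const_mul a).add
            ((hg.integrable_norm_pow two_ne_zero).const_mul b)) fun ω => ?_
        simpa using hsq.2 (Set.mem_univ (f ω)) (Set.mem_univ (g ω)) ha hb hab
    _ = a * ∫ ω, ‖f ω‖ ^ 2 ∂μ + b * ∫ ω, ‖g ω‖ ^ 2 ∂μ := by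
        rw [integral_add ((hf.integrable_norm_pow two_ne_zero).const_mul a)
          ((hg.integrable_norm_pow two_ne_zero).const_mul b), integral_const_mul,
          integral_const_mul]
    _ ≤ a * S + b * S := by gcongr
    _ = S := by rw [← add_mul, hab, one_mul]

theorem memLp_two_integral_norm_sq_le_of_ema {F : Type*} [NormedAddCommGroup F]
    [NormedSpace ℝ F] {mp m g : ℕ → Ω → F} {β S : ℝ} (hβ : β ∈ Set.Icc 0 1) (hS : 0 ≤ S)
    (hmp0 : ∀ ω, mp 0 ω = 0) (hm : ∀ k ω, m k ω = β • mp k ω + (1 - β) • g k ω)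
    (hmp : ∀ k ω, mp (k + 1) ω = m k ω)
    (hg : ∀ k, MemLp (g k) 2 μ ∧ ∫ ω, ‖g k ω‖ ^ 2 ∂μ ≤ S) (k : ℕ) :
    MemLp (m k) 2 μ ∧ ∫ ω, ‖m k ω‖ ^ 2 ∂μ ≤ S := by
  have hm0 : m 0 = (1 - β) • g 0 := funext fun ω => by
    rw [hm, hmp0, smul_zero, zero_add, Pi.smul_apply]
  have hm_succ : ∀ k, m (k + 1) = β • m k + (1 - β) • g (k + 1) := fun k => funext fun ω => by
    rw [hm, hmp, Pi.add_apply, Pi.smul_apply, Pi.smul_apply]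
  have hs0 : (0 : Ω → F) ∈ {f | MemLp f 2 μ ∧ ∫ ω, ‖f ω‖ ^ 2 ∂μ ≤ S} :=
    ⟨MemLp.zero, by simpa using hS⟩
  exact ema_mem_of_convex (convex_memLp_two_integral_norm_sq_le (μ := μ) (F := F) S) hs0
    (β := fun _ => β) (fun _ => hβ) hg hm0 hm_succ k

variable {F : Type*} [NormedAddCommGroup F] [InnerProductSpace ℝ F] [CompleteSpace F]
  {g u : Ω → F}

theorem integral_norm_sq_eq_of_condExp_ae_eq [IsFiniteMeasure μ] (hm : m ≤ m0)
    (hg : MemLp g 2 μ) (hu : MemLp u 2 μ) (hum : StronglyMeasurable[m] u)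
    (hgu : μ[g | m] =ᵐ[μ] u) :
    ∫ ω, ‖g ω‖ ^ 2 ∂μ = ∫ ω, ‖g ω - u ω‖ ^ 2 ∂μ + ∫ ω, ‖u ω‖ ^ 2 ∂μ := by
  have hug : ∫ ω, inner ℝ (u ω) (g ω) ∂μ = ∫ ω, ‖u ω‖ ^ 2 ∂μ := by
    rw [← integral_condExp hm]
    refine integral_congr_ae ?_
    filter_upwards [condExp_bilin_of_stronglyMeasurable_left (innerSL ℝ) hum
      (hu.integrable_inner hg) (hg.integrable one_le_two), hgu] with ω hpull hω
    exact hpull.trans (by rw [hω]; exact real_inner_self_eq_norm_sq _)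
  have hsub : ∀ ω, ‖g ω - u ω‖ ^ 2 = ‖g ω‖ ^ 2 - 2 * inner ℝ (u ω) (g ω) + ‖u ω‖ ^ 2 := by
    intro ω; rw [norm_sub_sq_real, real_inner_comm]
  have hg2 := hg.integrable_norm_pow two_ne_zero
  have hu2 := hu.integrable_norm_pow two_ne_zero
  have hug2 := (hu.integrable_inner hg).const_mul 2
  simp_rw [hsub]
  rw [integral_add (f := fun ω => ‖g ω‖ ^ 2 - 2 * inner ℝ (u ω) (g ω)) (hg2.sub hug2) hu2,
    integral_sub hg2 hug2, integral_const_mul, hug]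
  ring

theorem integral_norm_sq_le_of_condExp_ae_eq [IsProbabilityMeasure μ] {G : ℝ} (hm : m ≤ m0)
    (hg : MemLp g 2 μ) (hum : StronglyMeasurable[m] u) (hu : ∀ᵐ ω ∂μ, ‖u ω‖ ≤ G)
    (hgu : μ[g | m] =ᵐ[μ] u) :
    ∫ ω, ‖g ω‖ ^ 2 ∂μ ≤ ∫ ω, ‖g ω - u ω‖ ^ 2 ∂μ + G ^ 2 := by
  have hu2 : MemLp u 2 μ := MemLp.of_bound (hum.mono hm).aestronglyMeasurable G hu
  rw [integral_norm_sq_eq_of_condExp_ae_eq hm hg hu2 hum hgu]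
  gcongr
  calc ∫ ω, ‖u ω‖ ^ 2 ∂μ ≤ ∫ _, G ^ 2 ∂μ :=
        integral_mono_ae (hu2.integrable_norm_pow two_ne_zero) (integrable_const _) <| by
          filter_upwards [hu] with ω hω using pow_le_pow_left₀ (norm_nonneg _) hω 2
    _ = G ^ 2 := by simp

end SecondMoment

theorem measurable_gradient {F : Type*} [NormedAddCommGroup F] [InnerProductSpace ℝ F]
    [CompleteSpace F] [MeasurableSpace F] [BorelSpace F] (f : F → ℝ) :
    Measurable (gradient f) :=
  (InnerProductSpace.toDual ℝ F).symm.continuous.measurable.comp (measurable_fderiv ℝ f)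

theorem integral_norm_sq_le_of_condExp_eq_gradient {Ω : Type*} [MeasurableSpace Ω]
    {μ : Measure Ω} [IsProbabilityMeasure μ] {d : ℕ} {f : EuclideanSpace ℝ (Fin d) → ℝ}
    {θ g : Ω → EuclideanSpace ℝ (Fin d)} {G : ℝ} (hθ : Measurable θ) (hg : MemLp g 2 μ)
    (hG : ∀ᵐ ω ∂μ, ‖gradient f (θ ω)‖ ≤ G)
    (hunbiased : μ[g | MeasurableSpace.comap θ inferInstance] =ᵐ[μ] fun ω => gradient f (θ ω)) :
    ∫ ω, ‖g ω‖ ^ 2 ∂μ ≤ ∫ ω, ‖g ω - gradient f (θ ω)‖ ^ 2 ∂μ + G ^ 2 :=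
  integral_norm_sq_le_of_condExp_ae_eq hθ.comap_le hg
    ((measurable_gradient f).comp (comap_measurable θ)).stronglyMeasurable hG hunbiased

theorem sum_integral_le_of_ae_sum_le {Ω : Type*} [MeasurableSpace Ω] {μ : Measure Ω}
    [IsProbabilityMeasure μ] {X Y : ℕ → Ω → ℝ} {c : ℕ → ℝ} {T S : ℝ} {s : Finset ℕ}
    (hX : ∀ k, Integrable (X k) μ) (hY : ∀ k, Integrable (Y k) μ) (hc : ∀ k, 0 ≤ c k)
    (hYS : ∀ k, ∫ ω, Y k ω ∂μ ≤ S) (h : ∀ᵐ ω ∂μ, ∑ k ∈ s, X k ω ≤ T + ∑ k ∈ s, c k * Y k ω) :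
    ∑ k ∈ s, ∫ ω, X k ω ∂μ ≤ T + ∑ k ∈ s, c k * S := by
  have hcY : Integrable (fun ω => ∑ k ∈ s, c k * Y k ω) μ :=
    integrable_finsetSum _ fun k _ => (hY k).const_mul _
  calc ∑ k ∈ s, ∫ ω, X k ω ∂μ = ∫ ω, ∑ k ∈ s, X k ω ∂μ :=
        (integral_finsetSum _ fun k _ => hX k).symm
    _ ≤ ∫ ω, (T + ∑ k ∈ s, c k * Y k ω) ∂μ :=
        integral_mono_ae (integrable_finsetSum _ fun k _ => hX k) ((integrable_const T).add hcY) h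
    _ = T + ∑ k ∈ s, c k * ∫ ω, Y k ω ∂μ := by
        rw [integral_add (integrable_const T) hcY,
          integral_finsetSum _ fun k _ => (hY k).const_mul _]
        simp [integral_const_mul]
    _ ≤ T + ∑ k ∈ s, c k * S := by
        gcongr with k
        exacts [hc k, hYS k]

theorem adam_ae_sum_inner_le {Ω : Type*} [MeasurableSpace Ω] {μ : Measure Ω} {d : ℕ}
    {θ m v g dvec : ℕ → Ω → EuclideanSpace ℝ (Fin d)} {vhat : ℕ → Ω → Fin d → ℝ}
    {α β2 : ℕ → ℝ} {β1 M vstar Dt : ℝ} {x : EuclideanSpace ℝ (Fin d)} (K : ℕ)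
    (hα : ∀ k, 0 < α k) (hα' : ∀ k, α (k + 1) ≤ α k) (hβ1 : 0 ≤ β1) (hβ1' : β1 < 1)
    (hβ2 : ∀ k, β2 k ∈ Set.Ico 0 1) (hvstar : 0 < vstar)
    (hv0 : ∀ ω i, v 0 ω i = (1 - β2 0) * g 0 ω i ^ 2)
    (hv : ∀ k ω i, v (k + 1) ω i = β2 (k + 1) * v k ω i + (1 - β2 (k + 1)) * g (k + 1) ω i ^ 2)
    (hvhat : ∀ k ω i, vhat k ω i = v k ω i / (1 - β2 k ^ (k + 1)))
    (hdvec : ∀ k ω i, dvec k ω i = -(m k ω i / (1 - β1 ^ (k + 1))) / √(vhat k ω i))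
    (hθ : ∀ k ω, θ (k + 1) ω = θ k ω + α k • dvec k ω)
    (hM : ∀ k, ∀ᵐ ω ∂μ, ∀ i, g k ω i ^ 2 ≤ M) (hvstarle : ∀ k, ∀ᵐ ω ∂μ, ∀ i, vstar ≤ v k ω i)
    (hmono : ∀ k i, ∀ᵐ ω ∂μ, vhat k ω i ≤ vhat (k + 1) ω i)
    (hDt : ∀ k, ∀ᵐ ω ∂μ, ∀ i, (θ k ω i - x i) ^ 2 ≤ Dt) :
    ∀ᵐ ω ∂μ, ∑ k ∈ Finset.Icc 1 K, inner ℝ (θ k ω - x) (m k ω) ≤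
      d * Dt * √M * (1 - β1 ^ (K + 1)) / (2 * α K * √(1 - β2 K ^ (K + 1))) +
        ∑ k ∈ Finset.Icc 1 K,
          α k * √(1 - β2 k ^ (k + 1)) / (2 * (1 - β1 ^ (k + 1)) * √vstar) * ‖m k ω‖ ^ 2 := by
  filter_upwards [ae_all_iff.2 hM, ae_all_iff.2 hvstarle,
    ae_all_iff.2 fun k => ae_all_iff.2 (hmono k), ae_all_iff.2 hDt] with ω hMω hlow hmon hDω
  have htop : ∀ i, v K ω i ≤ M := fun i =>
    ema_mem_of_convex (y := (v · ω i)) (z := (g · ω i ^ 2)) (convex_Iic M)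
      ((sq_nonneg _).trans (hMω 0 i)) (fun k => ⟨(hβ2 k).1, (hβ2 k).2.le⟩) (fun k => hMω k i)
      (hv0 ω i) (fun k => hv k ω i) K
  refine adam_sum_inner_le hα (antitone_nat_of_succ_le hα') hβ1 hβ1' hβ2 hvstar (fun k i => ?_)
    (hvhat · ω) hlow htop (fun i => monotone_nat_of_le_succ fun k => hmon k i) hDω
  rw [hθ, PiLp.add_apply, PiLp.smul_apply, hdvec, smul_eq_mul]
  generalize 1 - β1 ^ (k + 1) = q
  ring

theorem adam_average_le_of_sum_le {A C S vstar β1 : ℝ} {α β2 : ℕ → ℝ} {K : ℕ} (hK : 1 ≤ K)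
    (hβ1 : 0 < β1) (hβ1' : β1 < 1) (hα : ∀ k, 0 < α k) (hC : 0 ≤ C) (hS : 0 ≤ S)
    (hA : A ≤ C * (1 - β1 ^ (K + 1)) / (2 * α K * √(1 - β2 K ^ (K + 1))) +
      ∑ k ∈ Finset.Icc 1 K,
        α k * √(1 - β2 k ^ (k + 1)) / (2 * (1 - β1 ^ (k + 1)) * √vstar) * S) :
    1 / (K : ℝ) * A ≤
      C * (1 - β1 ^ (K + 1)) / (2 * β1 * α K * √(1 - β2 K ^ (K + 1)) * K) +
        S / (2 * √vstar * β1 * (1 - β1) * K) *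
          ∑ k ∈ Finset.Icc 1 K, α k * √(1 - β2 k ^ (k + 1)) := by
  have hK' : (0 : ℝ) < K := by exact_mod_cast hK
  have hb1 : ∀ k, β1 * (1 - β1) ≤ 1 - β1 ^ (k + 1) := fun k => by
    nlinarith [pow_le_pow_of_le_one hβ1.le hβ1'.le (by omega : 1 ≤ k + 1), pow_one β1]
  have hq : 0 < β1 * (1 - β1) := mul_pos hβ1 (by linarith)
  have hT : 1 / (K : ℝ) * (C * (1 - β1 ^ (K + 1)) / (2 * α K * √(1 - β2 K ^ (K + 1)))) ≤
      C * (1 - β1 ^ (K + 1)) / (2 * β1 * α K * √(1 - β2 K ^ (K + 1)) * K) := by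
    have : 0 ≤ C * (1 - β1 ^ (K + 1)) / (2 * α K * √(1 - β2 K ^ (K + 1))) := by
      have := hα K; have := hq.trans_le (hb1 K); positivity
    calc _ = C * (1 - β1 ^ (K + 1)) / (2 * α K * √(1 - β2 K ^ (K + 1))) / K := by ring
      _ ≤ C * (1 - β1 ^ (K + 1)) / (2 * α K * √(1 - β2 K ^ (K + 1))) / β1 / K := by
          exact div_le_div_of_nonneg_right (le_div_self this hβ1 hβ1'.le) hK'.le
      _ = _ := by ring
  have hsum : ∀ k, 1 / (K : ℝ) *
      (α k * √(1 - β2 k ^ (k + 1)) / (2 * (1 - β1 ^ (k + 1)) * √vstar) * S) ≤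
      S / (2 * √vstar * β1 * (1 - β1) * K) * (α k * √(1 - β2 k ^ (k + 1))) := fun k => by
    have := hα k
    calc _ = α k * √(1 - β2 k ^ (k + 1)) * S / (2 * √vstar * K) / (1 - β1 ^ (k + 1)) := by
          generalize 1 - β1 ^ (k + 1) = q; ring
      _ ≤ α k * √(1 - β2 k ^ (k + 1)) * S / (2 * √vstar * K) / (β1 * (1 - β1)) := by
          gcongr; exact hb1 k
      _ = _ := by generalize 1 - β1 = p; ring
  calc 1 / (K : ℝ) * A ≤ 1 / (K : ℝ) * (C * (1 - β1 ^ (K + 1)) / (2 * α K * √(1 - β2 K ^ (K + 1))) +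
      ∑ k ∈ Finset.Icc 1 K,
        α k * √(1 - β2 k ^ (k + 1)) / (2 * (1 - β1 ^ (k + 1)) * √vstar) * S) := by gcongr
    _ ≤ _ := by
      rw [mul_add, Finset.mul_sum, Finset.mul_sum]
      exact add_le_add hT (Finset.sum_le_sum fun k _ => hsum k)

theorem adam_lemmaA7_general
    {Ω : Type*} [MeasurableSpace Ω] (μ : Measure Ω) [IsProbabilityMeasure μ]
    {d : ℕ} (f : EuclideanSpace ℝ (Fin d) → ℝ)
    (θ m mp v g dvec : ℕ → Ω → EuclideanSpace ℝ (Fin d))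
    (vhat : ℕ → Ω → Fin d → ℝ)
    (α β1 β2 : ℕ → ℝ)
    (σ2 b G B M vstar : ℝ)
    (D : EuclideanSpace ℝ (Fin d) → ℝ)
    (hαpos : ∀ k, 0 < α k)
    (hmp0 : ∀ ω, mp 0 ω = 0)
    (hmrec : ∀ k ω, m k ω = β1 k • mp k ω + (1 - β1 k) • g k ω)
    (hmpshift : ∀ k ω, mp (k+1) ω = m k ω)
    (hv0 : ∀ ω (i : Fin d), v 0 ω i = (1 - β2 0) * (g 0 ω i) ^ 2)
    (hvrec : ∀ k ω (i : Fin d), v (k+1) ω i = β2 (k+1) * v k ω i + (1 - β2 (k+1)) * (g (k+1) ω i) ^ 2)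
    (hvhat : ∀ k ω (i : Fin d), vhat k ω i = v k ω i / (1 - (β2 k) ^ (k+1)))
    (hdvec : ∀ k ω (i : Fin d), dvec k ω i = -(m k ω i / (1 - (β1 k) ^ (k+1))) / Real.sqrt (vhat k ω i))
    (hθrec : ∀ k ω, θ (k+1) ω = θ k ω + α k • dvec k ω)
    (hθmeas : ∀ k, Measurable (θ k)) (hgmeas : ∀ k, Measurable (g k))
    (hunbiased : ∀ k, μ[g k | MeasurableSpace.comap (θ k) inferInstance]
        =ᵐ[μ] fun ω => gradient f (θ k ω))
    (hvar : ∀ k, ∫ ω, ‖g k ω - gradient f (θ k ω)‖ ^ 2 ∂μ ≤ σ2 / b)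
    (hGbd : ∀ k, ∀ᵐ ω ∂μ, ‖gradient f (θ k ω)‖ ≤ G)
    (hBbd : ∀ k, ∀ᵐ ω ∂μ, ‖g k ω‖ ≤ B)
    (hDbd : ∀ x k, ∀ᵐ ω ∂μ, ‖θ k ω - x‖ ≤ D x)
    (hM : ∀ k, ∀ᵐ ω ∂μ, ∀ i, (g k ω i) ^ 2 ≤ M)
    (hvstar : 0 < vstar)
    (hvstarle : ∀ k, ∀ᵐ ω ∂μ, ∀ i, vstar ≤ v k ω i)
    (hβ2mem : ∀ k, β2 k ∈ Set.Ico (0:ℝ) 1)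
    (β1c : ℝ) (hβ1c : β1c ∈ Set.Ioo (0:ℝ) 1) (hβ1const : ∀ k, β1 k = β1c)
    (hαdec : ∀ k, α (k+1) ≤ α k)
    (hmono : ∀ k (i : Fin d), ∀ᵐ ω ∂μ, vhat k ω i ≤ vhat (k+1) ω i)
    (Dtil : EuclideanSpace ℝ (Fin d) → ℝ)
    (hDtil : ∀ x k, ∀ᵐ ω ∂μ, ∀ i, (θ k ω i - x i) ^ 2 ≤ Dtil x)
    :
    ∀ (K : ℕ), 1 ≤ K → ∀ x : EuclideanSpace ℝ (Fin d),
      (1 / (K:ℝ)) * ∑ k ∈ Finset.Icc 1 K, ∫ ω, (inner ℝ (θ k ω - x) (m k ω) : ℝ) ∂μ ≤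
        (d:ℝ) * Dtil x * Real.sqrt M * (1 - β1c ^ (K+1)) / (2 * β1c * α K * Real.sqrt (1 - (β2 K) ^ (K+1)) * (K:ℝ))
        + (σ2 / b + G ^ 2) / (2 * Real.sqrt vstar * β1c * (1 - β1c) * (K:ℝ)) * ∑ k ∈ Finset.Icc 1 K, α k * Real.sqrt (1 - (β2 k) ^ (k+1))
        + D x * G * ((1 - β1c) / β1c)
        + (1 - β1c) * D x * (B + Real.sqrt (σ2 / b + G ^ 2)) := by
  intro K hK x
  obtain ⟨hβ1, hβ1'⟩ := hβ1c
  have hS : 0 ≤ σ2 / b + G ^ 2 :=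
    add_nonneg ((integral_nonneg fun _ => by positivity).trans (hvar 0)) (sq_nonneg G)
  have hg : ∀ k, MemLp (g k) 2 μ ∧ ∫ ω, ‖g k ω‖ ^ 2 ∂μ ≤ σ2 / b + G ^ 2 := fun k =>
    have hgk := MemLp.of_bound (p := 2) (hgmeas k).aestronglyMeasurable B (hBbd k)
    ⟨hgk, (integral_norm_sq_le_of_condExp_eq_gradient (hθmeas k) hgk (hGbd k)
      (hunbiased k)).trans (by linarith [hvar k])⟩
  have hm := memLp_two_integral_norm_sq_le_of_ema ⟨hβ1.le, hβ1'.le⟩ hS hmp0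
    (by simpa only [hβ1const] using hmrec) hmpshift hg
  have hX : ∀ k, Integrable (fun ω => inner ℝ (θ k ω - x) (m k ω)) μ := fun k =>
    (MemLp.of_bound ((hθmeas k).sub_const x).aestronglyMeasurable (D x) (hDbd x k)).integrable_inner
      (hm k).1
  have hc : ∀ k, 0 ≤ α k * √(1 - β2 k ^ (k + 1)) / (2 * (1 - β1c ^ (k + 1)) * √vstar) := fun k => by
    have := sub_nonneg.2 (pow_le_one₀ (n := k + 1) hβ1.le hβ1'.le); have := hαpos k; positivity
  have hE := sum_integral_le_of_ae_sum_le hX (fun k => (hm k).1.integrable_norm_pow two_ne_zero) hc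
    (fun k => (hm k).2) (adam_ae_sum_inner_le K hαpos hαdec hβ1.le hβ1' hβ2mem hvstar hv0 hvrec
      hvhat (by simpa only [hβ1const] using hdvec) hθrec hM hvstarle hmono (hDtil x))
  obtain ⟨ω, hDω, hGω, hBω, hDtω⟩ :=
    ((hDbd x 0).and ((hGbd 0).and ((hBbd 0).and (hDtil x 0)))).exists
  have hC : 0 ≤ (d : ℝ) * Dtil x * √M := by
    have := Finset.sum_nonneg fun i (_ : i ∈ Finset.univ) => (sq_nonneg _).trans (hDtω i)
    simp only [Finset.sum_const, Finset.card_univ, Fintype.card_fin, nsmul_eq_mul] at this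
    positivity
  have := (norm_nonneg _).trans hDω; have := (norm_nonneg _).trans hGω
  have := (norm_nonneg _).trans hBω; have := sub_pos.2 hβ1'
  refine le_add_of_le_of_nonneg (le_add_of_le_of_nonneg
    (adam_average_le_of_sum_le hK hβ1 hβ1' hαpos hC hS hE) (by positivity)) (by positivity)

theorem adam_lemmaA7
    {Ω : Type*} [MeasurableSpace Ω] (μ : Measure Ω) [IsProbabilityMeasure μ]
    {d : ℕ} (f : EuclideanSpace ℝ (Fin d) → ℝ)
    (θ m mp v g dvec : ℕ → Ω → EuclideanSpace ℝ (Fin d))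
    (vhat : ℕ → Ω → Fin d → ℝ)
    (α β1 β2 : ℕ → ℝ)
    (σ2 b G B M vstar : ℝ)
    (D : EuclideanSpace ℝ (Fin d) → ℝ)
    (hf : ContDiff ℝ 1 f)
    (hb : 0 < b) (hσ2 : 0 ≤ σ2) (hG : 0 < G) (hB : 0 < B)
    (hαpos : ∀ k, 0 < α k)
    (hmp0 : ∀ ω, mp 0 ω = 0)
    (hmrec : ∀ k ω, m k ω = β1 k • mp k ω + (1 - β1 k) • g k ω)
    (hmpshift : ∀ k ω, mp (k+1) ω = m k ω)
    (hv0 : ∀ ω (i : Fin d), v 0 ω i = (1 - β2 0) * (g 0 ω i) ^ 2)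
    (hvrec : ∀ k ω (i : Fin d), v (k+1) ω i = β2 (k+1) * v k ω i + (1 - β2 (k+1)) * (g (k+1) ω i) ^ 2)
    (hvhat : ∀ k ω (i : Fin d), vhat k ω i = v k ω i / (1 - (β2 k) ^ (k+1)))
    (hdvec : ∀ k ω (i : Fin d), dvec k ω i = -(m k ω i / (1 - (β1 k) ^ (k+1))) / Real.sqrt (vhat k ω i))
    (hθrec : ∀ k ω, θ (k+1) ω = θ k ω + α k • dvec k ω)
    (hθmeas : ∀ k, Measurable (θ k)) (hgmeas : ∀ k, Measurable (g k))
    (hunbiased : ∀ k, μ[g k | MeasurableSpace.comap (θ k) inferInstance]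
        =ᵐ[μ] fun ω => gradient f (θ k ω))
    (hvar : ∀ k, ∫ ω, ‖g k ω - gradient f (θ k ω)‖ ^ 2 ∂μ ≤ σ2 / b)
    (hGbd : ∀ k, ∀ᵐ ω ∂μ, ‖gradient f (θ k ω)‖ ≤ G)
    (hBbd : ∀ k, ∀ᵐ ω ∂μ, ‖g k ω‖ ≤ B)
    (hDpos : ∀ x, 0 < D x)
    (hDbd : ∀ x k, ∀ᵐ ω ∂μ, ‖θ k ω - x‖ ≤ D x)
    (hM : ∀ k, ∀ᵐ ω ∂μ, ∀ i, (g k ω i) ^ 2 ≤ M)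
    (hvstar : 0 < vstar)
    (hvstarle : ∀ k, ∀ᵐ ω ∂μ, ∀ i, vstar ≤ v k ω i)
    (hβ2mem : ∀ k, β2 k ∈ Set.Ico (0:ℝ) 1)
    (β1c : ℝ) (hβ1c : β1c ∈ Set.Ioo (0:ℝ) 1) (hβ1const : ∀ k, β1 k = β1c)
    (hαdec : ∀ k, α (k+1) ≤ α k)
    (hmono : ∀ k (i : Fin d), ∀ᵐ ω ∂μ, vhat k ω i ≤ vhat (k+1) ω i)
    (Dtil : EuclideanSpace ℝ (Fin d) → ℝ)
    (hDtil : ∀ x k, ∀ᵐ ω ∂μ, ∀ i, (θ k ω i - x i) ^ 2 ≤ Dtil x)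
    :
    ∀ (K : ℕ), 1 ≤ K → ∀ x : EuclideanSpace ℝ (Fin d),
      (1 / (K:ℝ)) * ∑ k ∈ Finset.Icc 1 K, ∫ ω, (inner ℝ (θ k ω - x) (m k ω) : ℝ) ∂μ ≤
        (d:ℝ) * Dtil x * Real.sqrt M * (1 - β1c ^ (K+1)) / (2 * β1c * α K * Real.sqrt (1 - (β2 K) ^ (K+1)) * (K:ℝ))
        + (σ2 / b + G ^ 2) / (2 * Real.sqrt vstar * β1c * (1 - β1c) * (K:ℝ)) * ∑ k ∈ Finset.Icc 1 K, α k * Real.sqrt (1 - (β2 k) ^ (k+1))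
        + D x * G * ((1 - β1c) / β1c)
        + (1 - β1c) * D x * (B + Real.sqrt (σ2 / b + G ^ 2)) :=
  adam_lemmaA7_general μ f θ m mp v g dvec vhat α β1 β2 σ2 b G B M vstar D hαpos hmp0 hmrec hmpshift
    hv0 hvrec hvhat hdvec hθrec hθmeas hgmeas hunbiased hvar hGbd hBbd hDbd hM hvstar hvstarle
    hβ2mem β1c hβ1c hβ1const hαdec hmono Dtil hDtil
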